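/- For every nonnegative integer n and real λ, x, the truncated degenerate Bell polynomial of order 1 satisfies x·Bel^{(1)}_{n,λ}(x) = Σ_{m=0}^{n} (1/(m+1)) C(n,m) β_{n-m,λ} Bel_{m+1,λ}(x), where β_{j,λ} are the Carlitz degenerate Bernoulli numbers. -/

import Mathlib

open Finset

def degFall (l x : ℝ) (n : ℕ) : ℝ := ∏ i ∈ Finset.range n, (x - i * l)

def fall (x : ℝ) (n : ℕ) : ℝ := ∏ i ∈ Finset.range n, (x - i)

/-- The degenerate exponential `e_λ(t)` as a formal power series over ℝ. -/
noncomputable def degExpPS (l : ℝ) : PowerSeries ℝ :=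
  PowerSeries.mk fun n => degFall l 1 n / (n.factorial : ℝ)

/-!
Write `Φ_k = (e_λ(t) - 1)^k / k!`. Expanding `e_λ(t)^j = (1 + (e_λ(t) - 1))^j` and using
`e_λ(t)^j = Σ_m (j)_{m,λ} t^m/m!` (the degenerate falling factorials are of binomial type) gives
`(j)_{m,λ} = Σ_k m! [t^m]Φ_k · (j)_k` for `j ∈ ℕ`; since an expansion in falling factorials is
determined by its values at `0, …, m`, `Φ_k` is the exponential generating function of
`S_{2,λ}(·, k)`. As `Φ_k (e_λ - 1) = (k + 1) Φ_{k+1}`, the truncated generating functions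
`Q = Σ_{k ≤ n} x^{k+1}/(k+1) Φ_k` of `x Bel^{(1)}_{m,λ}(x)` and `P = Σ_{k ≤ n+1} x^k Φ_k` of
`Bel_{m,λ}(x)` satisfy `Q (e_λ - 1) = P - 1`, so `t Q = (P - 1) · t/(e_λ(t) - 1)`; the identity is
the coefficient of `t^{n+1}`.
-/

open PowerSeries
open scoped Nat

theorem coeff_mul_eq_of_coeff_eq {R : Type*} [Semiring R] {f g : R⟦X⟧} {n : ℕ}
    (h : ∀ i ≤ n, coeff i f = coeff i g) (u : R⟦X⟧) : coeff n (f * u) = coeff n (g * u) := by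
  simp only [coeff_mul]
  exact sum_congr rfl fun p hp => by rw [h p.1 (HasAntidiagonal.antidiagonal.fst_le hp)]

section EGF

variable {K : Type*} [Field K]

noncomputable def egf (a : ℕ → K) : K⟦X⟧ := mk fun n => a n / n !

@[simp]
theorem coeff_egf (a : ℕ → K) (n : ℕ) : coeff n (egf a) = a n / n ! := coeff_mk _ _

theorem egf_mul_egf [CharZero K] (a b : ℕ → K) :
    egf a * egf b = egf fun n => ∑ p ∈ antidiagonal n, n.choose p.1 * a p.1 * b p.2 := by
  ext n
  rw [coeff_mul, coeff_egf, sum_div]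
  refine sum_congr rfl fun ⟨i, j⟩ hij => ?_
  obtain rfl : i + j = n := by simpa using hij
  have := Nat.add_choose_mul_factorial_mul_factorial i j
  rw [← Nat.choose_symm_add] at this
  have hc : ((i + j).choose i : K) ≠ 0 := by
    exact_mod_cast (Nat.choose_pos (Nat.le_add_right i j)).ne'
  rw [coeff_egf, coeff_egf, ← this]
  push_cast
  field_simp

end EGF

theorem degFall_succ (l x : ℝ) (n : ℕ) : degFall l x (n + 1) = degFall l x n * (x - n * l) :=
  prod_range_succ _ _

theorem degFall_add (l x y : ℝ) (n : ℕ) :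
    degFall l (x + y) n =
      ∑ p ∈ antidiagonal n, n.choose p.1 * degFall l x p.1 * degFall l y p.2 := by
  induction n with
  | zero => simp [degFall]
  | succ n ih =>
    simp only [mul_assoc]
    rw [sum_antidiagonal_choose_succ_mul (fun i j => degFall l x i * degFall l y j), degFall_succ,
      ih, sum_mul, ← sum_add_distrib]
    refine sum_congr rfl fun ⟨i, j⟩ hij => ?_
    obtain rfl : i + j = n := by simpa using hij
    rw [Nat.choose_symm_add, degFall_succ, degFall_succ]
    push_cast
    ring

theorem egf_degFall_mul_egf_degFall (l x y : ℝ) :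
    egf (degFall l x) * egf (degFall l y) = egf (degFall l (x + y)) := by
  rw [egf_mul_egf]
  congr 1
  funext n
  rw [degFall_add]

theorem degFall_zero_left (l : ℝ) {n : ℕ} (hn : n ≠ 0) : degFall l 0 n = 0 :=
  prod_eq_zero (mem_range.2 (Nat.pos_of_ne_zero hn)) (by simp)

theorem degExpPS_pow (l : ℝ) (j : ℕ) : degExpPS l ^ j = egf (degFall l j) := by
  induction j with
  | zero =>
    ext n
    rcases eq_or_ne n 0 with rfl | hn
    · simp [degFall]
    · simp [degFall_zero_left l hn, coeff_one, hn]
  | succ j ih =>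
    rw [pow_succ, ih, Nat.cast_succ, ← egf_degFall_mul_egf_degFall]
    rfl

theorem fall_natCast (j k : ℕ) : fall j k = j.descFactorial k := by
  rw [fall, ← descPochhammer_eval_eq_prod_range, descPochhammer_eval_eq_descFactorial]

noncomputable def degStirlingEGF (l : ℝ) (k : ℕ) : ℝ⟦X⟧ := (k ! : ℝ)⁻¹ • (degExpPS l - 1) ^ k

theorem degStirlingEGF_zero (l : ℝ) : degStirlingEGF l 0 = 1 := by
  simp [degStirlingEGF]

theorem degStirlingEGF_mul_degExpPS_sub_one (l : ℝ) (k : ℕ) :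
    degStirlingEGF l k * (degExpPS l - 1) = ((k : ℝ) + 1) • degStirlingEGF l (k + 1) := by
  rw [degStirlingEGF, degStirlingEGF, smul_mul_assoc, ← pow_succ, smul_smul, Nat.factorial_succ]
  congr 1
  push_cast
  field_simp

theorem coeff_degStirlingEGF_of_lt (l : ℝ) {n k : ℕ} (h : n < k) :
    coeff n (degStirlingEGF l k) = 0 := by
  have hX : X ∣ degExpPS l - 1 := X_dvd_iff.2 (by simp [degExpPS, degFall])
  rw [degStirlingEGF, coeff_smul, X_pow_dvd_iff.1 (pow_dvd_pow_of_dvd hX k) n h, smul_zero]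

theorem degExpPS_pow_eq_sum (l : ℝ) {j N : ℕ} (hj : j < N) :
    degExpPS l ^ j = ∑ k ∈ range N, fall j k • degStirlingEGF l k := by
  have hsum : degExpPS l ^ j = ∑ k ∈ range (j + 1), fall j k • degStirlingEGF l k := by
    conv_lhs => rw [← sub_add_cancel (degExpPS l) 1, add_pow]
    refine sum_congr rfl fun k _ => ?_
    rw [one_pow, mul_one, fall_natCast, Nat.descFactorial_eq_factorial_mul_choose,
      degStirlingEGF, smul_smul, Nat.cast_mul, mul_right_comm, mul_inv_cancel₀ (by positivity),
      one_mul, Nat.cast_smul_eq_nsmul, nsmul_eq_mul, mul_comm]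
  rw [hsum]
  refine sum_subset (range_subset_range.2 hj) fun k _ hk => ?_
  rw [fall_natCast, Nat.descFactorial_of_lt (by simpa using hk), Nat.cast_zero, zero_smul]

theorem degFall_natCast_eq_sum (l : ℝ) {j n : ℕ} (hj : j ≤ n) :
    degFall l j n = ∑ k ∈ range (n + 1), n ! * coeff n (degStirlingEGF l k) * fall j k := by
  have h := congrArg (coeff n) (degExpPS_pow_eq_sum l (Nat.lt_succ_of_le hj))
  rw [degExpPS_pow, coeff_egf, map_sum, div_eq_iff (by positivity), sum_mul] at h
  rw [h]
  refine sum_congr rfl fun k _ => ?_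
  rw [coeff_smul, smul_eq_mul]
  ring

theorem eq_zero_of_sum_mul_fall_eq_zero {n : ℕ} {c : ℕ → ℝ}
    (h : ∀ j ≤ n, ∑ k ∈ range (n + 1), c k * fall j k = 0) : ∀ k ≤ n, c k = 0 := by
  intro k
  induction k using Nat.strong_induction_on with
  | _ k ih =>
    intro hk
    have hs := h k hk
    rw [sum_eq_single k] at hs
    · rw [fall_natCast, Nat.descFactorial_self] at hs
      exact (mul_eq_zero.1 hs).resolve_right (by positivity)
    · intro i _ hik
      rcases lt_or_gt_of_ne hik with hlt | hgt
      · rw [ih i hlt (hlt.le.trans hk), zero_mul]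
      · rw [fall_natCast, Nat.descFactorial_of_lt hgt, Nat.cast_zero, mul_zero]
    · exact fun hk' => absurd (mem_range.2 (Nat.lt_succ_of_le hk)) hk'

theorem coeff_degStirlingEGF {l : ℝ} {n : ℕ} {S2 : ℕ → ℝ}
    (hS : ∀ j : ℕ, degFall l j n = ∑ k ∈ range (n + 1), S2 k * fall j k) {k : ℕ} (hk : k ≤ n) :
    coeff n (degStirlingEGF l k) = S2 k / n ! := by
  have h := eq_zero_of_sum_mul_fall_eq_zero
    (c := fun k => S2 k - n ! * coeff n (degStirlingEGF l k)) (fun j hj => by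
      simp only [sub_mul, sum_sub_distrib, ← hS, ← degFall_natCast_eq_sum l hj, sub_self]) k hk
  rw [eq_div_iff (by positivity)]
  linarith

theorem coeff_sum_smul_degStirlingEGF {l : ℝ} {S2 : ℕ → ℕ → ℝ}
    (hS : ∀ j m : ℕ, degFall l j m = ∑ k ∈ range (m + 1), S2 m k * fall j k)
    (a : ℕ → ℝ) {i N : ℕ} (hi : i < N) :
    coeff i (∑ k ∈ range N, a k • degStirlingEGF l k) =
      (∑ k ∈ range (i + 1), S2 i k * a k) / i ! := by
  rw [map_sum, ← sum_subset (range_subset_range.2 hi), sum_div]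
  · refine sum_congr rfl fun k hk => ?_
    rw [coeff_smul, coeff_degStirlingEGF (hS · i) (Nat.lt_succ_iff.1 (mem_range.1 hk)), smul_eq_mul]
    ring
  · intro k _ hk
    rw [coeff_smul, coeff_degStirlingEGF_of_lt l (by simpa using hk), smul_zero]

theorem sum_smul_degStirlingEGF_mul_degExpPS_sub_one (l x : ℝ) (N : ℕ) :
    (∑ k ∈ range N, (x ^ (k + 1) / (k + 1)) • degStirlingEGF l k) * (degExpPS l - 1) =
      ∑ k ∈ range (N + 1), x ^ k • degStirlingEGF l k - 1 := by
  rw [sum_range_succ', pow_zero, one_smul, degStirlingEGF_zero, add_sub_cancel_right, sum_mul]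
  refine sum_congr rfl fun k _ => ?_
  rw [smul_mul_assoc, degStirlingEGF_mul_degExpPS_sub_one, smul_smul,
    div_mul_cancel₀ _ (by positivity)]

theorem coeff_sum_smul_degStirlingEGF_sub_one {l : ℝ} {S2 : ℕ → ℕ → ℝ}
    (hS : ∀ j m : ℕ, degFall l j m = ∑ k ∈ range (m + 1), S2 m k * fall j k)
    (x : ℝ) {n i : ℕ} (hi : i ≤ n + 1) :
    coeff i (∑ k ∈ range (n + 2), x ^ k • degStirlingEGF l k - 1) =
      coeff i (X * egf fun m => (∑ k ∈ range (m + 2), S2 (m + 1) k * x ^ k) / (m + 1)) := by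
  rw [map_sub, coeff_sum_smul_degStirlingEGF hS _ (Nat.lt_succ_of_le hi)]
  rcases i with _ | m
  · have h00 : S2 0 0 = 1 := by simpa [degFall, fall] using (hS 0 0).symm
    simp [h00]
  · rw [coeff_succ_X_mul, coeff_egf, coeff_one, if_neg m.succ_ne_zero, sub_zero,
      Nat.factorial_succ]
    push_cast
    field_simp

theorem truncated_degenerate_Bell_order_one
    (l x : ℝ) (n : ℕ)
    (S2 : ℕ → ℕ → ℝ)
    (hS : ∀ (y : ℝ) (m : ℕ),
      degFall l y m = ∑ k ∈ Finset.range (m + 1), S2 m k * fall y k)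
    (β : ℕ → ℝ)
    (hβ : (PowerSeries.mk fun m => β m / (m.factorial : ℝ)) * (degExpPS l - 1)
      = PowerSeries.X) :
    x * ∑ k ∈ Finset.range (n + 1), S2 n k * x ^ k / ((k : ℝ) + 1)
      = ∑ m ∈ Finset.range (n + 1), (1 / ((m : ℝ) + 1)) * ((n.choose m : ℕ) : ℝ) *
          β (n - m) * (∑ k ∈ Finset.range (m + 2), S2 (m + 1) k * x ^ k) := by
  have hS' : ∀ j m : ℕ, degFall l j m = ∑ k ∈ range (m + 1), S2 m k * fall j k := fun j => hS j
  have hβ' : egf β * (degExpPS l - 1) = X := hβ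
  set c : ℕ → ℝ := fun m => (∑ k ∈ range (m + 2), S2 (m + 1) k * x ^ k) / (m + 1)
  set Q := ∑ k ∈ range (n + 1), (x ^ (k + 1) / (k + 1)) • degStirlingEGF l k
  have hQ : X * Q = (∑ k ∈ range (n + 2), x ^ k • degStirlingEGF l k - 1) * egf β := by
    rw [← sum_smul_degStirlingEGF_mul_degExpPS_sub_one, ← hβ']
    ring
  have hcoeff : coeff n Q = coeff n (egf c * egf β) := by
    rw [← coeff_succ_X_mul, hQ, coeff_mul_eq_of_coeff_eq
      (fun i hi => coeff_sum_smul_degStirlingEGF_sub_one hS' x hi), mul_assoc, coeff_succ_X_mul]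
  rw [coeff_sum_smul_degStirlingEGF hS' _ n.lt_succ_self, egf_mul_egf, coeff_egf,
    div_left_inj' (by positivity), Nat.sum_antidiagonal_eq_sum_range_succ
      (fun i j => (n.choose i : ℝ) * c i * β j)] at hcoeff
  calc x * ∑ k ∈ range (n + 1), S2 n k * x ^ k / ((k : ℝ) + 1)
      = ∑ k ∈ range (n + 1), S2 n k * (x ^ (k + 1) / (k + 1)) := by
        rw [mul_sum]
        exact sum_congr rfl fun k _ => by ring
    _ = ∑ m ∈ range (n + 1), n.choose m * c m * β (n - m) := hcoeff
    _ = _ := sum_congr rfl fun m _ => by ring
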